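/- arXiv:2402.06232 — 4 statements merged into one kernel-verified Lean document; each statement's English description precedes it below -/
import Mathlib

section
/- If a subgroup of S_d generated by permutations σ₁, …, σ_k acts transitively on {1, …, d} with d ≥ 1, then N(σ₁) + ⋯ + N(σ_k) ≥ d − 1, where N(σ) = d − (number of cycles of σ). -/
/-- The number of cycles of a permutation, counting fixed points as cycles. -/
def numCycles {d : ℕ} (π : Equiv.Perm (Fin d)) : ℕ :=
  Multiset.card π.cycleType + (Finset.univ.filter fun x => π x = x).card

/-- `N(π) = d -` (number of cycles of `π`, counting fixed points). -/
def NN {d : ℕ} (π : Equiv.Perm (Fin d)) : ℕ := d - numCycles π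

/-!
A cycle of length `ℓ` is a product of `ℓ - 1` transpositions, so each `σᵢ` is a product of
`N(σᵢ)` transpositions. Read each transposition `(a b)` as an edge `{a, b}` of a graph on
`Fin d`: every element of the group generated by the `σᵢ` moves points only within connected
components, so transitivity makes the graph connected, and a connected graph on `d` vertices
has at least `d - 1` edges.
-/

open Equiv Equiv.Perm Finset SimpleGraph

section SwapFactorization

variable {α : Type*} [Fintype α] [DecidableEq α]

theorem Equiv.Perm.IsCycle.exists_prod_swap_eq {f : Perm α} (hf : f.IsCycle) :
    ∃ p : List (α × α), (p.map (Function.uncurry swap)).prod = f ∧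
      p.length + 1 = #f.support := by
  obtain ⟨x, hx, -⟩ := id hf
  -- `List.formPerm l` is by definition the product of the swaps of consecutive entries of `l`.
  refine ⟨(f.toList x).zip (f.toList x).tail, ?_, ?_⟩
  · rw [List.map_uncurry_zip_eq_zipWith, ← List.formPerm.eq_def, formPerm_toList,
      hf.cycleOf_eq hx]
  · have := hf.two_le_card_support
    simp only [List.length_zip, List.length_tail, length_toList, hf.cycleOf_eq hx]
    omega

theorem Equiv.Perm.exists_prod_swap_eq (f : Perm α) :
    ∃ p : List (α × α), (p.map (Function.uncurry swap)).prod = f ∧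
      p.length + Multiset.card f.cycleType = #f.support := by
  induction f using cycle_induction_on with
  | base_one => exact ⟨[], by simp⟩
  | base_cycles f hf =>
    obtain ⟨p, hp, hlen⟩ := hf.exists_prod_swap_eq
    exact ⟨p, hp, by rwa [hf.cycleType, Multiset.card_singleton]⟩
  | induction_disjoint σ τ hστ _ hσ hτ =>
    obtain ⟨p, hp, hplen⟩ := hσ
    obtain ⟨q, hq, hqlen⟩ := hτ
    refine ⟨p ++ q, by simp [hp, hq], ?_⟩
    rw [hστ.cycleType_mul, hστ.card_support_mul, List.length_append, Multiset.card_add]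
    omega

end SwapFactorization

theorem exists_prod_swap_eq_and_length_eq_NN {d : ℕ} (f : Perm (Fin d)) :
    ∃ p : List (Fin d × Fin d), (p.map (Function.uncurry swap)).prod = f ∧ p.length = NN f := by
  obtain ⟨p, hp, hlen⟩ := f.exists_prod_swap_eq
  have hfix : (univ.filter fun x => f x = x) = f.supportᶜ := by ext; simp
  have hsupp : #f.support ≤ d := by simpa using f.support.card_le_univ
  refine ⟨p, hp, ?_⟩
  rw [NN, numCycles, hfix, card_compl, Fintype.card_fin]
  omega

section Reachability

variable {α : Type*} {G : SimpleGraph α}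

theorem SimpleGraph.Reachable.swap_apply [DecidableEq α] {a b : α} (h : G.Reachable a b)
    (x : α) : G.Reachable x (swap a b x) := by
  rw [swap_apply_def]
  split_ifs with hxa hxb
  · exact hxa ▸ h
  · exact hxb ▸ h.symm
  · rfl

theorem SimpleGraph.reachable_list_prod_swap_apply [DecidableEq α] (p : List (α × α))
    (hp : ∀ q ∈ p, G.Reachable q.1 q.2) (x : α) :
    G.Reachable x ((p.map (Function.uncurry swap)).prod x) := by
  induction p generalizing x with
  | nil => rfl
  | cons q p ih =>
    rw [List.map_cons, List.prod_cons, Perm.mul_apply]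
    exact (ih (fun q' hq' => hp q' (.tail _ hq')) x).trans ((hp q (.head _)).swap_apply _)

theorem SimpleGraph.reachable_apply_of_mem_closure {S : Set (Perm α)}
    (hS : ∀ g ∈ S, ∀ x, G.Reachable x (g x)) {g : Perm α} (hg : g ∈ Subgroup.closure S) (x : α) :
    G.Reachable x (g x) := by
  induction hg using Subgroup.closure_induction generalizing x with
  | mem g hg => exact hS g hg x
  | one => rfl
  | mul g h _ _ hg hh => exact (hh x).trans (hg (h x))
  | inv g _ hg => simpa using (hg (g⁻¹ x)).symm

theorem SimpleGraph.reachable_fromEdgeSet_of_mem {s : Set (Sym2 α)} {a b : α}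
    (h : s(a, b) ∈ s) : (fromEdgeSet s).Reachable a b := by
  by_cases hab : a = b
  · exact hab ▸ .refl a
  · exact ((fromEdgeSet_adj _).2 ⟨h, hab⟩).reachable

theorem SimpleGraph.card_edgeSet_fromEdgeSet_le (E : Finset (Sym2 α)) :
    Nat.card (fromEdgeSet (E : Set (Sym2 α))).edgeSet ≤ #E := by
  calc Nat.card (fromEdgeSet (E : Set (Sym2 α))).edgeSet
      ≤ Nat.card (E : Set (Sym2 α)) :=
        Nat.card_mono E.finite_toSet (by simp [edgeSet_fromEdgeSet])
    _ = #E := by simp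

end Reachability

theorem stmt4 (d k : ℕ) (hd : 1 ≤ d) (σ : Fin k → Equiv.Perm (Fin d))
    (htrans : ∀ x y : Fin d, ∃ g ∈ Subgroup.closure (Set.range σ), g x = y) :
    d - 1 ≤ ∑ i, NN (σ i) := by
  choose p hprod hlen using fun i => exists_prod_swap_eq_and_length_eq_NN (σ i)
  set E : Finset (Sym2 (Fin d)) :=
    univ.biUnion fun i => ((p i).map (Function.uncurry Sym2.mk)).toFinset
  set G := fromEdgeSet (E : Set (Sym2 (Fin d)))
  have hσ : ∀ i x, G.Reachable x (σ i x) := fun i x => by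
    rw [← hprod i]
    refine reachable_list_prod_swap_apply (p i) (fun q hq => reachable_fromEdgeSet_of_mem ?_) x
    exact mem_biUnion.2 ⟨i, mem_univ i, List.mem_toFinset.2 (List.mem_map_of_mem hq)⟩
  have hconn : G.Connected := by
    have : Nonempty (Fin d) := ⟨⟨0, hd⟩⟩
    refine ⟨fun x y => ?_⟩
    obtain ⟨g, hg, rfl⟩ := htrans x y
    exact reachable_apply_of_mem_closure (by rintro _ ⟨i, rfl⟩; exact hσ i) hg x
  have hE : #E ≤ ∑ i, NN (σ i) := calc
    #E ≤ ∑ i, #((p i).map (Function.uncurry Sym2.mk)).toFinset := card_biUnion_le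
    _ ≤ ∑ i, NN (σ i) := sum_le_sum fun i _ =>
      (List.toFinset_card_le _).trans (by rw [List.length_map, hlen])
  have hcard := hconn.card_vert_le_card_edgeSet_add_one
  rw [Nat.card_fin] at hcard
  have hedges : Nat.card G.edgeSet ≤ #E := card_edgeSet_fromEdgeSet_le E
  omega
end

section
/- Let S be a monoid. The category ES (objects: elements of S; morphisms u → v: elements s ∈ S with u·s = v) is filtered if and only if the following two conditions hold: (a) for all s, t ∈ S there exist u, v ∈ S with s·u = t·v, and (b) for all r, s, t ∈ S with r·s = r·t there exists u ∈ S with s·u = t·u. -/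
/-- The category `ES` associated to a monoid `S`: objects are elements of `S`,
and a morphism `u → v` is an element `s ∈ S` with `u * s = v`. -/
abbrev ES (S : Type*) [Monoid S] : Type _ := S

instance (S : Type*) [Monoid S] : CategoryTheory.Category (ES S) where
  Hom u v := {s : S // u * s = v}
  id u := ⟨1, mul_one u⟩
  comp f g := ⟨f.1 * g.1, by rw [← mul_assoc, f.2, g.2]⟩
  id_comp f := Subtype.ext (one_mul _)
  comp_id f := Subtype.ext (mul_one _)
  assoc f g h := Subtype.ext (mul_assoc _ _ _)

theorem stmt7 (S : Type*) [Monoid S] :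
    CategoryTheory.IsFiltered (ES S) ↔
      ((∀ s t : S, ∃ u v : S, s * u = t * v) ∧
       (∀ r s t : S, r * s = r * t → ∃ u : S, s * u = t * u)) := by
  constructor
  · intro h
    constructor
    · intro s t
      obtain ⟨w, f, g, -⟩ := CategoryTheory.IsFilteredOrEmpty.cocone_objs (C := ES S) s t
      exact ⟨f.1, g.1, f.2.trans g.2.symm⟩
    · intro r s t hrst
      obtain ⟨w, c, hc⟩ := CategoryTheory.IsFilteredOrEmpty.cocone_maps
        (C := ES S) (X := r) (Y := r * s) (⟨s, rfl⟩ : {x : S // r * x = r * s}) (⟨t, hrst.symm⟩ : {x : S // r * x = r * s})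
      exact ⟨c.1, congrArg Subtype.val hc⟩
  · rintro ⟨ha, hb⟩
    haveI : CategoryTheory.IsFilteredOrEmpty (ES S) := ⟨?_, ?_⟩
    · exact @CategoryTheory.IsFiltered.mk _ _ _ ⟨(1 : S)⟩
    · intro X Y
      obtain ⟨u, v, huv⟩ := ha X Y
      exact ⟨X * u, ⟨u, rfl⟩, ⟨v, huv.symm⟩, trivial⟩
    · intro X Y f g
      obtain ⟨u, hu⟩ := hb X f.1 g.1 (f.2.trans g.2.symm)
      exact ⟨Y * u, ⟨u, rfl⟩, Subtype.ext hu⟩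
end

section
/- Let σ₁, …, σ_k ∈ S_d and σ_∂ = σ₁⋯σ_k. If N(σ₁) + ⋯ + N(σ_k) = N(σ₁⋯σ_k), and O₁, …, O_r are the orbits of ⟨σ₁,…,σ_k⟩ on {1,…,d}, then Σ_i N(σ_i) = d − r and each restriction σ_∂|_{O_j} is an |O_j|-cycle. -/
open Equiv MulAction Subgroup

section Lemmas
variable {d : ℕ}

instance (G : Subgroup (Equiv.Perm (Fin d))) : Finite (MulAction.orbitRel.Quotient G (Fin d)) :=
  Quotient.finite _

/-- Orbits of the closure of `S` are contained in any `S`-stable set. -/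
lemma orbit_closure_subset {S : Set (Equiv.Perm (Fin d))} {T : Set (Fin d)}
    (hT : ∀ s ∈ S, ∀ x ∈ T, s x ∈ T) {x : Fin d} (hx : x ∈ T) :
    MulAction.orbit (Subgroup.closure S) x ⊆ T := by
  have key : ∀ g ∈ Subgroup.closure S, ∀ y ∈ T, g y ∈ T := by
    intro g hg
    induction hg using Subgroup.closure_induction with
    | mem s hs => exact hT s hs
    | one => intro y hy; simpa using hy
    | mul a b _ _ ha hb => intro y hy; exact ha _ (hb y hy)
    | inv a _ ha =>
      intro y hy
      have hfin : T.Finite := Set.toFinite T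
      have hmaps : Set.MapsTo a T T := fun z hz => ha z hz
      have hbij : Set.BijOn a T T :=
        (hfin.injOn_iff_bijOn_of_mapsTo hmaps).mp a.injective.injOn
      obtain ⟨z, hz, hze⟩ := hbij.surjOn hy
      have : a⁻¹ y = z := by
        have := congrArg a.symm hze
        simpa using this.symm
      simpa [this] using hz
  rintro y ⟨⟨g, hg⟩, rfl⟩
  exact key g hg x hx

lemma mem_orbit_subgroup_iff {G : Subgroup (Equiv.Perm (Fin d))} {x y : Fin d} :
    y ∈ MulAction.orbit G x ↔ ∃ g ∈ G, g x = y := by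
  constructor
  · rintro ⟨⟨g, hg⟩, rfl⟩; exact ⟨g, hg, rfl⟩
  · rintro ⟨g, hg, rfl⟩; exact ⟨⟨g, hg⟩, rfl⟩

lemma card_quot_le_of_le {H K : Subgroup (Equiv.Perm (Fin d))} (h : H ≤ K) :
    Nat.card (MulAction.orbitRel.Quotient K (Fin d)) ≤ Nat.card (MulAction.orbitRel.Quotient H (Fin d)) := by
  refine Nat.card_le_card_of_surjective
    (Quotient.map' (s₁ := orbitRel H (Fin d)) (s₂ := orbitRel K (Fin d)) id ?_) ?_
  · intro a b hab
    obtain ⟨g, hg, hgx⟩ := mem_orbit_subgroup_iff.mp hab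
    exact mem_orbit_subgroup_iff.mpr ⟨g, h hg, hgx⟩
  · intro q
    induction q using Quotient.inductionOn' with
    | h x => exact ⟨Quotient.mk'' x, rfl⟩


lemma mem_orbit_zpowers_iff {π : Equiv.Perm (Fin d)} {x y : Fin d} :
    y ∈ MulAction.orbit (Subgroup.zpowers π) x ↔ ∃ n : ℤ, (π ^ n) x = y := by
  constructor
  · rintro ⟨⟨g, hg⟩, rfl⟩
    obtain ⟨n, rfl⟩ := Subgroup.mem_zpowers_iff.mp hg
    exact ⟨n, rfl⟩
  · rintro ⟨n, rfl⟩
    exact ⟨⟨π ^ n, Subgroup.zpow_mem_zpowers π n⟩, rfl⟩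

lemma zpow_apply_fixed {π : Equiv.Perm (Fin d)} {x : Fin d} (h : π x = x) (n : ℤ) :
    (π ^ n) x = x :=
  Function.IsFixedPt.perm_zpow h n

lemma numCycles_eq_card_quot (π : Equiv.Perm (Fin d)) :
    numCycles π = Nat.card (MulAction.orbitRel.Quotient (Subgroup.zpowers π) (Fin d)) := by
  classical
  have hne : ∀ c ∈ π.cycleFactorsFinset, c.support.Nonempty := fun c hc =>
    (Equiv.Perm.mem_cycleFactorsFinset_iff.mp hc).1.nonempty_support
  set f : (↥π.cycleFactorsFinset ⊕ {x : Fin d // π x = x}) →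
      MulAction.orbitRel.Quotient (Subgroup.zpowers π) (Fin d) :=
    fun s => match s with
    | Sum.inl c => Quotient.mk'' ((c.1.support.min' (hne c.1 c.2)))
    | Sum.inr x => Quotient.mk'' x.1
    with hf
  have keymem : ∀ (c : Equiv.Perm (Fin d)) (hc : c ∈ π.cycleFactorsFinset),
      (c.support.min' (hne c hc)) ∈ c.support := fun c hc => Finset.min'_mem _ _
  have hsc : ∀ {u v : Fin d}, (Quotient.mk'' u : MulAction.orbitRel.Quotient
      (Subgroup.zpowers π) (Fin d)) = Quotient.mk'' v → π.SameCycle u v := by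
    intro u v huv
    have := Quotient.eq''.mp huv
    have h2 : u ∈ MulAction.orbit (Subgroup.zpowers π) v := this
    obtain ⟨n, hn⟩ := mem_orbit_zpowers_iff.mp h2
    exact ⟨-n, by rw [← hn]; simp [← Equiv.Perm.mul_apply, ← zpow_add]⟩
  have hbij : Function.Bijective f := by
    constructor
    · rintro (⟨c₁, hc₁⟩ | ⟨x, hx⟩) (⟨c₂, hc₂⟩ | ⟨y, hy⟩) h
      · simp only [hf] at h
        have hsame := hsc h
        have e1 : π.cycleOf (c₁.support.min' (hne c₁ hc₁)) = c₁ :=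
          (Equiv.Perm.cycle_is_cycleOf (keymem c₁ hc₁) hc₁).symm
        have e2 : π.cycleOf (c₂.support.min' (hne c₂ hc₂)) = c₂ :=
          (Equiv.Perm.cycle_is_cycleOf (keymem c₂ hc₂) hc₂).symm
        have := hsame.cycleOf_eq
        simp only [Sum.inl.injEq, Subtype.ext_iff]
        rw [← e1, ← e2, this]
      · exfalso
        simp only [hf] at h
        obtain ⟨n, hn⟩ := hsc h
        set m := c₁.support.min' (hne c₁ hc₁) with hm
        have hmy : m = y := by
          have h2 : (π ^ (-n)) ((π ^ n) m) = (π ^ (-n)) y := by rw [hn]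
          rw [← Equiv.Perm.mul_apply, ← zpow_add, neg_add_cancel, zpow_zero,
            Equiv.Perm.one_apply, zpow_apply_fixed hy] at h2
          exact h2
        have hπm : π m = c₁ m := ((Equiv.Perm.mem_cycleFactorsFinset_iff.mp hc₁).2 m
          (keymem c₁ hc₁)).symm
        have hno : π m ≠ m := by
          rw [hπm]
          exact Equiv.Perm.mem_support.mp (keymem c₁ hc₁)
        exact hno (by rw [hmy]; exact hy)
      · exfalso
        simp only [hf] at h
        obtain ⟨n, hn⟩ := hsc h
        set m := c₂.support.min' (hne c₂ hc₂) with hm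
        have : x = m := by
          have h2 := zpow_apply_fixed hx n
          rw [h2] at hn; exact hn
        have hπm : π m = c₂ m := ((Equiv.Perm.mem_cycleFactorsFinset_iff.mp hc₂).2 m
          (keymem c₂ hc₂)).symm
        have hne2 : π m ≠ m := by
          rw [hπm]; exact Equiv.Perm.mem_support.mp (keymem c₂ hc₂)
        apply hne2
        rw [← this]; exact hx
      · simp only [hf] at h
        obtain ⟨n, hn⟩ := hsc h
        have := zpow_apply_fixed hx n
        rw [this] at hn
        simpa [Sum.inr.injEq, Subtype.ext_iff] using hn
    · intro q
      induction q using Quotient.inductionOn' with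
      | h x =>
        by_cases hx : π x = x
        · exact ⟨Sum.inr ⟨x, hx⟩, rfl⟩
        · have hxs : x ∈ π.support := Equiv.Perm.mem_support.mpr hx
          have hc : π.cycleOf x ∈ π.cycleFactorsFinset :=
            Equiv.Perm.cycleOf_mem_cycleFactorsFinset_iff.mpr hxs
          refine ⟨Sum.inl ⟨π.cycleOf x, hc⟩, ?_⟩
          simp only [hf]
          apply Quotient.sound'
          have hmin := keymem (π.cycleOf x) hc
          have hsame : π.SameCycle x ((π.cycleOf x).support.min' (hne _ hc)) :=
            (Equiv.Perm.mem_support_cycleOf_iff.mp hmin).1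
          obtain ⟨n, hn⟩ := hsame
          exact mem_orbit_zpowers_iff.mpr ⟨n, hn⟩
  have := Nat.card_eq_of_bijective f hbij
  rw [← this, Nat.card_eq_fintype_card, Fintype.card_sum, Fintype.card_coe]
  unfold numCycles
  congr 1
  · unfold Equiv.Perm.cycleType
    simp
  · simp [Fintype.card_subtype]

/-- Adding a swap to a generating set merges at most two orbits. -/
lemma swap_step (S : Set (Equiv.Perm (Fin d))) (a b : Fin d) :
    Nat.card (MulAction.orbitRel.Quotient (Subgroup.closure S) (Fin d)) ≤
    Nat.card (MulAction.orbitRel.Quotient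
      (Subgroup.closure (insert (Equiv.swap a b) S)) (Fin d)) + 1 := by
  classical
  set G := Subgroup.closure S with hG
  set K := Subgroup.closure (insert (Equiv.swap a b) S) with hK
  have hGK : G ≤ K := Subgroup.closure_mono (Set.subset_insert _ _)
  have claim : ∀ x y : Fin d, y ∈ MulAction.orbit K x →
      y ∈ MulAction.orbit G x ∨
      ((x ∈ MulAction.orbit G a ∪ MulAction.orbit G b) ∧
       (y ∈ MulAction.orbit G a ∪ MulAction.orbit G b)) := by
    intro x y hy
    by_cases hx : x ∈ MulAction.orbit G a ∪ MulAction.orbit G b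
    · right
      refine ⟨hx, ?_⟩
      refine orbit_closure_subset (T := MulAction.orbit G a ∪ MulAction.orbit G b) ?_ hx hy
      intro s hs z hz
      rcases Set.mem_insert_iff.mp hs with rfl | hsS
      · by_cases hza : z = a
        · subst hza
          rw [Equiv.swap_apply_left]
          exact Or.inr (MulAction.mem_orbit_self b)
        · by_cases hzb : z = b
          · subst hzb
            rw [Equiv.swap_apply_right]
            exact Or.inl (MulAction.mem_orbit_self a)
          · rw [Equiv.swap_apply_of_ne_of_ne hza hzb]
            exact hz
      · cases hz with
        | inl h =>
          left
          obtain ⟨g, hg, rfl⟩ := mem_orbit_subgroup_iff.mp h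
          exact mem_orbit_subgroup_iff.mpr ⟨s * g, mul_mem (Subgroup.subset_closure hsS) hg, rfl⟩
        | inr h =>
          right
          obtain ⟨g, hg, rfl⟩ := mem_orbit_subgroup_iff.mp h
          exact mem_orbit_subgroup_iff.mpr ⟨s * g, mul_mem (Subgroup.subset_closure hsS) hg, rfl⟩
    · left
      refine orbit_closure_subset (T := MulAction.orbit G x) ?_ (MulAction.mem_orbit_self x) hy
      intro s hs z hz
      rcases Set.mem_insert_iff.mp hs with rfl | hsS
      · have hza : z ≠ a := by
          rintro rfl
          exact hx (Or.inl (MulAction.mem_orbit_symm.mp hz))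
        have hzb : z ≠ b := by
          rintro rfl
          exact hx (Or.inr (MulAction.mem_orbit_symm.mp hz))
        rw [Equiv.swap_apply_of_ne_of_ne hza hzb]
        exact hz
      · obtain ⟨g, hg, rfl⟩ := mem_orbit_subgroup_iff.mp hz
        exact mem_orbit_subgroup_iff.mpr ⟨s * g, mul_mem (Subgroup.subset_closure hsS) hg, rfl⟩
  have hmap : ∀ u v : Fin d, (MulAction.orbitRel G (Fin d)).r u v →
      (MulAction.orbitRel K (Fin d)).r u v := by
    intro u v huv
    obtain ⟨g, hg, hgx⟩ := mem_orbit_subgroup_iff.mp huv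
    exact mem_orbit_subgroup_iff.mpr ⟨g, hGK hg, hgx⟩
  set φ : MulAction.orbitRel.Quotient G (Fin d) → MulAction.orbitRel.Quotient K (Fin d) :=
    Quotient.map' id hmap with hφ
  set ψ : MulAction.orbitRel.Quotient G (Fin d) →
      (MulAction.orbitRel.Quotient K (Fin d)) ⊕ Unit :=
    fun q => if q = Quotient.mk'' a then Sum.inr () else Sum.inl (φ q) with hψ
  have hinj : Function.Injective ψ := by
    intro q₁ q₂ h
    induction q₁ using Quotient.inductionOn' with
    | h x =>
    induction q₂ using Quotient.inductionOn' with
    | h y =>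
    simp only [hψ] at h
    by_cases h1 : (Quotient.mk'' x : MulAction.orbitRel.Quotient G (Fin d)) = Quotient.mk'' a
    · by_cases h2 : (Quotient.mk'' y : MulAction.orbitRel.Quotient G (Fin d)) = Quotient.mk'' a
      · rw [h1, h2]
      · rw [if_pos h1, if_neg h2] at h
        exact absurd h (by simp)
    · by_cases h2 : (Quotient.mk'' y : MulAction.orbitRel.Quotient G (Fin d)) = Quotient.mk'' a
      · rw [if_neg h1, if_pos h2] at h
        exact absurd h (by simp)
      · rw [if_neg h1, if_neg h2] at h
        have hφeq : φ (Quotient.mk'' x) = φ (Quotient.mk'' y) := Sum.inl_injective h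
        have hxy : x ∈ MulAction.orbit K y := Quotient.eq''.mp hφeq
        rcases claim y x hxy with hGxy | ⟨hyab, hxab⟩
        · exact Quotient.sound' hGxy
        · have hxb : x ∈ MulAction.orbit G b := by
            cases hxab with
            | inl hxa => exact absurd (Quotient.sound' hxa) h1
            | inr hxb => exact hxb
          have hyb : y ∈ MulAction.orbit G b := by
            cases hyab with
            | inl hya => exact absurd (Quotient.sound' hya) h2
            | inr hyb => exact hyb
          have e1 : MulAction.orbit G x = MulAction.orbit G b := MulAction.orbit_eq_iff.mpr hxb
          have e2 : MulAction.orbit G y = MulAction.orbit G b := MulAction.orbit_eq_iff.mpr hyb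
          refine Quotient.sound' ?_
          show x ∈ MulAction.orbit G y
          rw [e2, ← e1]
          exact MulAction.mem_orbit_self x
  calc Nat.card (MulAction.orbitRel.Quotient G (Fin d))
      ≤ Nat.card ((MulAction.orbitRel.Quotient K (Fin d)) ⊕ Unit) :=
        Nat.card_le_card_of_injective ψ hinj
    _ = Nat.card (MulAction.orbitRel.Quotient K (Fin d)) + 1 := by
        simp [Nat.card_sum]

end Lemmas

lemma card_quot_le_d (G : Subgroup (Equiv.Perm (Fin d))) :
    Nat.card (MulAction.orbitRel.Quotient G (Fin d)) ≤ d := by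
  have hsurj : Function.Surjective
      (Quotient.mk'' : Fin d → MulAction.orbitRel.Quotient G (Fin d)) := by
    intro q
    induction q using Quotient.inductionOn' with
    | h x => exact ⟨x, rfl⟩
  have := Nat.card_le_card_of_surjective _ hsurj
  simpa using this

lemma orbit_trans {G : Subgroup (Equiv.Perm (Fin d))} {x y z : Fin d}
    (h1 : z ∈ MulAction.orbit G y) (h2 : y ∈ MulAction.orbit G x) :
    z ∈ MulAction.orbit G x := by
  obtain ⟨g, hg, rfl⟩ := mem_orbit_subgroup_iff.mp h1
  obtain ⟨g', hg', rfl⟩ := mem_orbit_subgroup_iff.mp h2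
  exact mem_orbit_subgroup_iff.mpr ⟨g * g', mul_mem hg hg', rfl⟩

/-- Multiplying by the swap `(a, τ a)` splits a cycle: the orbit count goes up. -/
lemma cycle_split (τ : Equiv.Perm (Fin d)) (a : Fin d) (ha : τ a ≠ a) :
    Nat.card (MulAction.orbitRel.Quotient (Subgroup.zpowers τ) (Fin d)) + 1 ≤
    Nat.card (MulAction.orbitRel.Quotient
      (Subgroup.zpowers (Equiv.swap a (τ a) * τ)) (Fin d)) := by
  classical
  set b := τ a with hb
  set τ' := Equiv.swap a b * τ with hτ'
  have hfix : τ' a = a := by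
    simp [hτ', Equiv.Perm.mul_apply, ← hb, Equiv.swap_apply_right]
  -- every τ'-orbit is contained in a τ-orbit
  have hsub : ∀ x : Fin d, MulAction.orbit (Subgroup.zpowers τ') x ⊆
      MulAction.orbit (Subgroup.zpowers τ) x := by
    intro x
    rw [Subgroup.zpowers_eq_closure]
    refine orbit_closure_subset ?_ (MulAction.mem_orbit_self x)
    rintro s hs z hz
    rcases hs with rfl
    have hτz : τ z ∈ MulAction.orbit (Subgroup.zpowers τ) x := by
      obtain ⟨g, hg, rfl⟩ := mem_orbit_subgroup_iff.mp hz
      exact mem_orbit_subgroup_iff.mpr ⟨τ * g, mul_mem (Subgroup.mem_zpowers τ) hg, rfl⟩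
    have hab : b ∈ MulAction.orbit (Subgroup.zpowers τ) a :=
      mem_orbit_subgroup_iff.mpr ⟨τ, Subgroup.mem_zpowers τ, rfl⟩
    show (Equiv.swap a b * τ) z ∈ _
    rw [Equiv.Perm.mul_apply]
    by_cases h1 : τ z = a
    · rw [h1, Equiv.swap_apply_left]
      exact orbit_trans hab (h1 ▸ hτz)
    · by_cases h2 : τ z = b
      · rw [h2, Equiv.swap_apply_right]
        exact orbit_trans (MulAction.mem_orbit_symm.mp hab) (h2 ▸ hτz)
      · rw [Equiv.swap_apply_of_ne_of_ne h1 h2]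
        exact hτz
  have hmap : ∀ u v : Fin d, (MulAction.orbitRel (Subgroup.zpowers τ') (Fin d)).r u v →
      (MulAction.orbitRel (Subgroup.zpowers τ) (Fin d)).r u v := fun u v huv => hsub v huv
  set φ : MulAction.orbitRel.Quotient (Subgroup.zpowers τ') (Fin d) →
      MulAction.orbitRel.Quotient (Subgroup.zpowers τ) (Fin d) :=
    Quotient.map' id hmap with hφ
  have hφmk : ∀ z : Fin d, φ (Quotient.mk'' z) = Quotient.mk'' z := fun z => rfl
  have hsurj : Function.Surjective φ := by
    intro q
    induction q using Quotient.inductionOn' with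
    | h x => exact ⟨Quotient.mk'' x, rfl⟩
  -- a is fixed by τ', so its τ'-orbit is a singleton
  have hafix : ∀ g ∈ Subgroup.zpowers τ', g a = a := by
    intro g hg
    obtain ⟨n, rfl⟩ := Subgroup.mem_zpowers_iff.mp hg
    exact zpow_apply_fixed hfix n
  have hba : (Quotient.mk'' b : MulAction.orbitRel.Quotient (Subgroup.zpowers τ') (Fin d)) ≠
      Quotient.mk'' a := by
    intro h
    have : b ∈ MulAction.orbit (Subgroup.zpowers τ') a := Quotient.eq''.mp h
    obtain ⟨g, hg, hgb⟩ := mem_orbit_subgroup_iff.mp this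
    rw [hafix g hg] at hgb
    exact ha hgb.symm
  have hbamk : (Quotient.mk'' b : MulAction.orbitRel.Quotient (Subgroup.zpowers τ) (Fin d)) =
      Quotient.mk'' a :=
    Quotient.sound' (mem_orbit_subgroup_iff.mpr ⟨τ, Subgroup.mem_zpowers τ, rfl⟩)
  set h : (MulAction.orbitRel.Quotient (Subgroup.zpowers τ) (Fin d)) ⊕ Unit →
      MulAction.orbitRel.Quotient (Subgroup.zpowers τ') (Fin d) :=
    fun s => match s with
    | Sum.inl q => if q = Quotient.mk'' a then Quotient.mk'' b else Function.surjInv hsurj q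
    | Sum.inr _ => Quotient.mk'' a
    with hh
  have hinj : Function.Injective h := by
    have hri : ∀ q, φ (Function.surjInv hsurj q) = q := fun q => Function.rightInverse_surjInv hsurj q
    rintro (q₁ | u₁) (q₂ | u₂) he <;> simp only [hh] at he
    · by_cases h1 : q₁ = Quotient.mk'' a
      · by_cases h2 : q₂ = Quotient.mk'' a
        · rw [h1, h2]
        · rw [if_pos h1, if_neg h2] at he
          have := congrArg φ he
          rw [hφmk, hri, hbamk] at this
          exact absurd this.symm h2
      · by_cases h2 : q₂ = Quotient.mk'' a
        · rw [if_neg h1, if_pos h2] at he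
          have := congrArg φ he
          rw [hφmk, hri, hbamk] at this
          exact absurd this h1
        · rw [if_neg h1, if_neg h2] at he
          have := congrArg φ he
          rw [hri, hri] at this
          rw [this]
    · exfalso
      by_cases h1 : q₁ = Quotient.mk'' a
      · rw [if_pos h1] at he
        exact hba he
      · rw [if_neg h1] at he
        have := congrArg φ he
        rw [hri, hφmk] at this
        exact h1 this
    · exfalso
      by_cases h2 : q₂ = Quotient.mk'' a
      · rw [if_pos h2] at he
        exact hba he.symm
      · rw [if_neg h2] at he
        have := congrArg φ he
        rw [hri, hφmk] at this
        exact h2 this.symm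
    · rfl
  have := Nat.card_le_card_of_injective h hinj
  simpa [Nat.card_sum] using this

/-- The `NN`-decrease lemma. -/
lemma NN_swap_mul (τ : Equiv.Perm (Fin d)) (a : Fin d) (ha : τ a ≠ a) :
    NN (Equiv.swap a (τ a) * τ) + 1 ≤ NN τ ∧ 1 ≤ NN τ := by
  have h1 := cycle_split τ a ha
  have h2 := card_quot_le_d (Subgroup.zpowers (Equiv.swap a (τ a) * τ))
  have h3 := card_quot_le_d (Subgroup.zpowers τ)
  unfold NN
  rw [numCycles_eq_card_quot, numCycles_eq_card_quot]
  omega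

/-- Adding a generator `τ` decreases the orbit count by at most `NN τ`. -/
lemma insert_step (n : ℕ) : ∀ (τ : Equiv.Perm (Fin d)) (S : Set (Equiv.Perm (Fin d))),
    NN τ ≤ n →
    Nat.card (MulAction.orbitRel.Quotient (Subgroup.closure S) (Fin d)) ≤
    Nat.card (MulAction.orbitRel.Quotient (Subgroup.closure (insert τ S)) (Fin d)) + NN τ := by
  induction n with
  | zero =>
    intro τ S hn
    by_cases hτ : τ = 1
    · have hcl : Subgroup.closure (insert τ S) = Subgroup.closure S := by
        subst hτ
        refine le_antisymm ?_ (Subgroup.closure_mono (Set.subset_insert _ _))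
        rw [Subgroup.closure_le]
        rintro x (rfl | hx)
        · exact one_mem _
        · exact Subgroup.subset_closure hx
      rw [hcl]
      omega
    · exfalso
      have : ∃ a, τ a ≠ a := by
        by_contra hcon
        push_neg at hcon
        exact hτ (Equiv.ext hcon)
      obtain ⟨a, ha⟩ := this
      have := (NN_swap_mul τ a ha).2
      omega
  | succ n ih =>
    intro τ S hn
    by_cases hτ : τ = 1
    · have hcl : Subgroup.closure (insert τ S) = Subgroup.closure S := by
        subst hτ
        refine le_antisymm ?_ (Subgroup.closure_mono (Set.subset_insert _ _))
        rw [Subgroup.closure_le]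
        rintro x (rfl | hx)
        · exact one_mem _
        · exact Subgroup.subset_closure hx
      rw [hcl]
      omega
    · have : ∃ a, τ a ≠ a := by
        by_contra hcon
        push_neg at hcon
        exact hτ (Equiv.ext hcon)
      obtain ⟨a, ha⟩ := this
      obtain ⟨hdec, hpos⟩ := NN_swap_mul τ a ha
      set τ' := Equiv.swap a (τ a) * τ with hτ'def
      have step1 := ih τ' S (by omega)
      have step2 := swap_step (insert τ' S) a (τ a)
      have step3 : Subgroup.closure (insert τ S) ≤
          Subgroup.closure (insert (Equiv.swap a (τ a)) (insert τ' S)) := by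
        rw [Subgroup.closure_le]
        rintro x (hxeq | hx)
        · rw [hxeq]
          have hsw : Equiv.swap a (τ a) ∈
              Subgroup.closure (insert (Equiv.swap a (τ a)) (insert τ' S)) :=
              Subgroup.subset_closure (Set.mem_insert _ _)
          have hτ'mem : τ' ∈
              Subgroup.closure (insert (Equiv.swap a (τ a)) (insert τ' S)) :=
              Subgroup.subset_closure (Set.mem_insert_of_mem _ (Set.mem_insert _ _))
          have hxeq2 : (Equiv.swap a (τ a))⁻¹ * τ' = τ := by
            rw [hτ'def, inv_mul_cancel_left]
          have hmem := mul_mem (inv_mem hsw) hτ'mem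
          rwa [hxeq2] at hmem
        · exact Subgroup.subset_closure (Set.mem_insert_of_mem _ (Set.mem_insert_of_mem _ hx))
      have step4 := card_quot_le_of_le step3
      omega

/-- The main counting inequality. -/
lemma list_ineq (l : List (Equiv.Perm (Fin d))) :
    d ≤ Nat.card (MulAction.orbitRel.Quotient
      (Subgroup.closure {x | x ∈ l}) (Fin d)) + (l.map NN).sum := by
  induction l with
  | nil =>
    have hempty : ({x | x ∈ ([] : List (Equiv.Perm (Fin d)))} : Set _) = ∅ := by
      ext z; simp
    rw [hempty, Subgroup.closure_empty]
    have hbij : Function.Bijective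
        (Quotient.mk'' : Fin d → MulAction.orbitRel.Quotient
          (⊥ : Subgroup (Equiv.Perm (Fin d))) (Fin d)) := by
      constructor
      · intro x y hxy
        have : x ∈ MulAction.orbit (⊥ : Subgroup (Equiv.Perm (Fin d))) y :=
          Quotient.eq''.mp hxy
        obtain ⟨g, hg, rfl⟩ := mem_orbit_subgroup_iff.mp this
        rw [Subgroup.mem_bot.mp hg]
        simp
      · intro q
        induction q using Quotient.inductionOn' with
        | h x => exact ⟨x, rfl⟩
    have := Nat.card_eq_of_bijective _ hbij
    simp only [List.map_nil, List.sum_nil, add_zero]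
    rw [← this]
    simp
  | cons τ t ih =>
    have hset : ({x | x ∈ τ :: t} : Set (Equiv.Perm (Fin d))) = insert τ {x | x ∈ t} := by
      ext z; simp [List.mem_cons]
    rw [hset, List.map_cons, List.sum_cons]
    have := insert_step (NN τ) τ {x | x ∈ t} le_rfl
    omega

theorem stmt16 (d k : ℕ) (σ : Fin k → Equiv.Perm (Fin d))
    (hadd : ∑ i, NN (σ i) = NN (List.ofFn σ).prod) :
    (∑ i, NN (σ i)
        = d - Nat.card (MulAction.orbitRel.Quotient
            (Subgroup.closure (Set.range σ)) (Fin d))) ∧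
    ∀ x y : Fin d, (∃ g ∈ Subgroup.closure (Set.range σ), g x = y) →
      ∃ n : ℤ, (((List.ofFn σ).prod) ^ n) x = y := by
  classical
  set P := (List.ofFn σ).prod with hPdef
  set G := Subgroup.closure (Set.range σ) with hGdef
  have hPG : P ∈ G := by
    apply Subgroup.list_prod_mem
    intro g hg
    have : g ∈ Set.range σ := List.mem_ofFn.mp hg
    exact Subgroup.subset_closure this
  have hle : Subgroup.zpowers P ≤ G := by
    rw [Subgroup.zpowers_eq_closure, Subgroup.closure_le]
    simpa using hPG
  have hrange : ({x | x ∈ List.ofFn σ} : Set (Equiv.Perm (Fin d))) = Set.range σ := by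
    ext g; simp [List.mem_ofFn]
  have hsum : ((List.ofFn σ).map NN).sum = ∑ i, NN (σ i) := by
    rw [List.map_ofFn, List.sum_ofFn]
    rfl
  have hmain := list_ineq (List.ofFn σ)
  rw [hrange, hsum, ← hGdef] at hmain
  set r := Nat.card (MulAction.orbitRel.Quotient G (Fin d)) with hrdef
  have hrc : r ≤ numCycles P := by
    rw [numCycles_eq_card_quot]
    exact card_quot_le_of_le hle
  have hcd : numCycles P ≤ d := by
    rw [numCycles_eq_card_quot]
    exact card_quot_le_d _
  have hNP : NN P = d - numCycles P := rfl
  rw [hadd, hNP] at hmain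
  have hrd : r ≤ d := card_quot_le_d _
  have hceq : numCycles P = r := by omega
  constructor
  · rw [hadd, hNP, hceq]
  · intro x y ⟨g, hg, hgxy⟩
    have hmap : ∀ u v : Fin d,
        (MulAction.orbitRel (Subgroup.zpowers P) (Fin d)).r u v →
        (MulAction.orbitRel G (Fin d)).r u v := by
      intro u v huv
      obtain ⟨g', hg', hgx⟩ := mem_orbit_subgroup_iff.mp huv
      exact mem_orbit_subgroup_iff.mpr ⟨g', hle hg', hgx⟩
    set φ : MulAction.orbitRel.Quotient (Subgroup.zpowers P) (Fin d) →
        MulAction.orbitRel.Quotient G (Fin d) := Quotient.map' id hmap with hφ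
    have hsurj : Function.Surjective φ := by
      intro q
      induction q using Quotient.inductionOn' with
      | h z => exact ⟨Quotient.mk'' z, rfl⟩
    have hcard : Nat.card (MulAction.orbitRel.Quotient (Subgroup.zpowers P) (Fin d)) =
        Nat.card (MulAction.orbitRel.Quotient G (Fin d)) := by
      rw [← numCycles_eq_card_quot, hceq]
    have hbij : Function.Bijective φ :=
      (Nat.bijective_iff_surjective_and_card φ).mpr ⟨hsurj, hcard⟩
    have hGxy : (Quotient.mk'' x : MulAction.orbitRel.Quotient G (Fin d)) = Quotient.mk'' y := by
      refine Quotient.sound' ?_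
      exact mem_orbit_subgroup_iff.mpr ⟨g⁻¹, inv_mem hg, by
        rw [← hgxy]; simp⟩
    have hφxy : φ (Quotient.mk'' x) = φ (Quotient.mk'' y) := hGxy
    have := hbij.1 hφxy
    have hmem : x ∈ MulAction.orbit (Subgroup.zpowers P) y := Quotient.eq''.mp this
    obtain ⟨n, hn⟩ := mem_orbit_zpowers_iff.mp hmem
    refine ⟨-n, ?_⟩
    rw [← hn, ← Equiv.Perm.mul_apply, ← zpow_add, neg_add_cancel, zpow_zero, Equiv.Perm.one_apply]
end

section
/- The number of ways to factor a fixed d-cycle in S_d as a product of d−1 transpositions is d^{d−2}. -/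
/-!
Write `m(σ)` for the number of orbits of `σ ∈ S_n` (fixed points included) and `P(σ)` for the
product of the orbit sizes. Right multiplication by `swap a b` merges the orbits of `a` and `b` when
they differ and otherwise only refines the orbits. Hence `σ * τ₁ ⋯ τₖ` can be a full cycle only if
`k ≥ m(σ) - 1`, and for `k = m(σ) - 1` every step must merge two orbits. Sorting these minimal
lists by their first merge, and using `∑ P(σ τ) = n (m(σ) - 1) P(σ)` over the merging
transpositions `τ` (merging the orbits `A`, `B` multiplies `P` by `1/|A| + 1/|B|`), induction gives
`n · #(minimal lists for σ) = (m(σ) - 1)! n^(m(σ) - 1) P(σ)`. For `σ = 1` the minimal lists are the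
factorizations of the `(n - 1)!` full cycles, which all have equally many factorizations since
they are conjugate; so each has `n^(n-2)`.
-/

open Finset
open scoped Nat

namespace Equiv.Perm

variable {α : Type*}

theorem IsSwap.conj [DecidableEq α] {τ : Perm α} (h : τ.IsSwap) (g : Perm α) :
    (g * τ * g⁻¹).IsSwap := by
  obtain ⟨x, y, hxy, rfl⟩ := h
  exact ⟨g x, g y, g.injective.ne hxy, (swap_apply_apply g x y).symm⟩

section SameCycle

variable [Finite α] {f σ : Perm α} {a b x y : α}

theorem SameCycle.rel_of_forall_rel_apply {r : α → α → Prop} (refl : ∀ z, r z z)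
    (trans : ∀ {x y z}, r x y → r y z → r x z) (step : ∀ z, r z (f z))
    (h : f.SameCycle x y) : r x y := by
  obtain ⟨n, -, rfl⟩ := h.exists_pow_eq'
  clear h
  induction n with
  | zero => exact refl x
  | succ n ih => rw [pow_succ', mul_apply]; exact trans ih (step _)

variable [DecidableEq α]

theorem sameCycle_mul_swap_of_not_sameCycle (h : ¬σ.SameCycle a b) :
    (σ * swap a b).SameCycle a b := by
  set f := σ * swap a b
  -- Starting from `f a = σ b`, the `f`-orbit of `a` follows the `σ`-orbit of `b` until it hits `b`.
  have walk : ∀ n, f.SameCycle a ((σ ^ (n + 1)) b) ∨ f.SameCycle a b := by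
    intro n
    induction n with
    | zero =>
      left
      simpa [f, swap_apply_left] using (sameCycle_apply_right (f := f)).2 (SameCycle.refl f a)
    | succ n ih =>
      refine ih.elim (fun ha => ?_) Or.inr
      by_cases hb : (σ ^ (n + 1)) b = b
      · exact Or.inr (hb ▸ ha)
      · have hna : (σ ^ (n + 1)) b ≠ a := fun e =>
          h (e ▸ sameCycle_pow_right.2 (SameCycle.refl σ b)).symm
        left
        rw [pow_succ', mul_apply, ← swap_apply_of_ne_of_ne hna hb, ← mul_apply]
        exact sameCycle_apply_right.2 ha
  simpa [Nat.sub_add_cancel (orderOf_pos σ), pow_orderOf_eq_one] using walk (orderOf σ - 1)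

theorem SameCycle.mul_swap (h : ¬σ.SameCycle a b) (hxy : σ.SameCycle x y) :
    (σ * swap a b).SameCycle x y := by
  set f := σ * swap a b
  have hab : f.SameCycle a b := sameCycle_mul_swap_of_not_sameCycle h
  refine hxy.rel_of_forall_rel_apply (SameCycle.refl f) (·.trans ·) fun z => ?_
  rcases eq_or_ne z a with rfl | hza
  · simpa [f] using sameCycle_apply_right.2 hab
  rcases eq_or_ne z b with rfl | hzb
  · simpa [f] using sameCycle_apply_right.2 hab.symm
  · simpa [f, swap_apply_of_ne_of_ne hza hzb] using sameCycle_apply_right.2 (SameCycle.refl f z)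

theorem SameCycle.of_mul_swap (hab : σ.SameCycle a b)
    (h : (σ * swap a b).SameCycle x y) : σ.SameCycle x y := by
  refine h.rel_of_forall_rel_apply (SameCycle.refl σ) (·.trans ·) fun z => ?_
  rw [mul_apply, sameCycle_apply_right]
  rcases eq_or_ne z a with rfl | hza
  · simpa using hab
  rcases eq_or_ne z b with rfl | hzb
  · simpa using hab.symm
  · rw [swap_apply_of_ne_of_ne hza hzb]

end SameCycle

section Orbits

variable [Fintype α] [DecidableEq α] {σ π : Perm α} {a b x y : α}

theorem swap_eq_swap_iff {c d : α} (hab : a ≠ b) :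
    swap c d = swap a b ↔ (c = a ∧ d = b) ∨ (c = b ∧ d = a) := by
  refine ⟨fun h => ?_, by rintro (⟨rfl, rfl⟩ | ⟨rfl, rfl⟩) <;> simp [swap_comm]⟩
  have hcd : c ≠ d := by
    rintro rfl
    exact hab (swap_eq_one_iff.1 (h.symm.trans (swap_self c)))
  have := congrArg (fun τ : Perm α => (τ.support : Set α)) h
  simp only [support_swap hcd, support_swap hab, coe_pair] at this
  exact Set.pair_eq_pair_iff.1 this

theorem sum_comp_swap {M : Type*} [AddCommMonoid M] {s : Finset (α × α)}
    (hs : ∀ p ∈ s, p.1 ≠ p.2 ∧ p.swap ∈ s) (f : Perm α → M) :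
    ∑ p ∈ s, f (swap p.1 p.2) = 2 • ∑ τ ∈ s.image (fun p => swap p.1 p.2), f τ := by
  rw [Finset.sum_comp, smul_sum]
  refine sum_congr rfl fun τ hτ => ?_
  obtain ⟨⟨a, b⟩, hp, rfl⟩ := mem_image.1 hτ
  obtain ⟨hab, hba⟩ := hs _ hp
  have hfiber : ({q ∈ s | swap q.1 q.2 = swap a b} : Finset (α × α)) = {(a, b), (b, a)} := by
    ext ⟨c, d⟩
    simp only [mem_filter, swap_eq_swap_iff hab, mem_insert, mem_singleton, Prod.mk.injEq]
    constructor
    · exact And.right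
    · rintro (⟨rfl, rfl⟩ | ⟨rfl, rfl⟩)
      exacts [⟨hp, .inl ⟨rfl, rfl⟩⟩, ⟨hba, .inr ⟨rfl, rfl⟩⟩]
  rw [hfiber, card_pair fun h => hab (Prod.ext_iff.1 h).1]

def orbitFinset (σ : Perm α) (x : α) : Finset α := {y | σ.SameCycle x y}

def orbits (σ : Perm α) : Finset (Finset α) := univ.image σ.orbitFinset

def numOrbits (σ : Perm α) : ℕ := #σ.orbits

def orbitSizeProd (σ : Perm α) : ℕ := ∏ S ∈ σ.orbits, #S

@[simp]
theorem mem_orbitFinset : y ∈ σ.orbitFinset x ↔ σ.SameCycle x y := by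
  simp [orbitFinset]

theorem mem_orbitFinset_self (σ : Perm α) (x : α) : x ∈ σ.orbitFinset x :=
  mem_orbitFinset.2 (SameCycle.refl σ x)

theorem orbitFinset_eq_orbitFinset_iff : σ.orbitFinset x = σ.orbitFinset y ↔ σ.SameCycle x y := by
  refine ⟨fun h => mem_orbitFinset.1 (h ▸ mem_orbitFinset_self σ x) |>.symm, fun h => ?_⟩
  ext z
  simp only [mem_orbitFinset]
  exact ⟨h.symm.trans, h.trans⟩

theorem orbitFinset_mem_orbits (σ : Perm α) (x : α) : σ.orbitFinset x ∈ σ.orbits :=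
  mem_image_of_mem _ (mem_univ x)

theorem mem_orbits {S : Finset α} : S ∈ σ.orbits ↔ ∃ x, σ.orbitFinset x = S := by
  simp [orbits]

theorem card_orbitFinset_ne_zero (σ : Perm α) (x : α) : #(σ.orbitFinset x) ≠ 0 :=
  card_ne_zero_of_mem (mem_orbitFinset_self σ x)

theorem filter_orbitFinset_eq (σ : Perm α) (x : α) :
    ({y | σ.orbitFinset y = σ.orbitFinset x} : Finset α) = σ.orbitFinset x := by
  ext y
  simp [orbitFinset_eq_orbitFinset_iff, sameCycle_comm]

theorem orbitFinset_eq_of_mem (h : y ∈ σ.orbitFinset x) : σ.orbitFinset y = σ.orbitFinset x :=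
  orbitFinset_eq_orbitFinset_iff.2 (mem_orbitFinset.1 h).symm

theorem eq_orbitFinset_of_mem_orbits {S : Finset α} (hS : S ∈ σ.orbits) (hx : x ∈ S) :
    S = σ.orbitFinset x := by
  obtain ⟨y, rfl⟩ := mem_orbits.1 hS
  exact (orbitFinset_eq_of_mem hx).symm

theorem orbits_eq_singleton_univ (h : σ.numOrbits = 1) : σ.orbits = {univ} := by
  obtain ⟨S, hS⟩ := card_eq_one.1 h
  suffices S = univ by rw [hS, this]
  refine eq_univ_of_forall fun x => ?_
  have := orbitFinset_mem_orbits σ x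
  rw [hS, mem_singleton] at this
  exact this ▸ mem_orbitFinset_self σ x

theorem orbitSizeProd_of_numOrbits_eq_one (h : σ.numOrbits = 1) :
    σ.orbitSizeProd = Fintype.card α := by
  rw [orbitSizeProd, orbits_eq_singleton_univ h, prod_singleton, card_univ]

theorem sameCycle_mul_swap_iff (h : ¬σ.SameCycle a b) :
    (σ * swap a b).SameCycle x y ↔ σ.SameCycle x y ∨
      (x ∈ σ.orbitFinset a ∪ σ.orbitFinset b ∧ y ∈ σ.orbitFinset a ∪ σ.orbitFinset b) := by
  set f := σ * swap a b
  set U := σ.orbitFinset a ∪ σ.orbitFinset b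
  have hfa : f a = σ b := by simp [f]
  have hfb : f b = σ a := by simp [f]
  have hfz : ∀ {z}, z ≠ a → z ≠ b → f z = σ z := fun hza hzb => by
    simp [f, swap_apply_of_ne_of_ne hza hzb]
  have hU : ∀ {z w}, σ.SameCycle z w → z ∈ U → w ∈ U := by
    intro z w hzw hz
    simp only [U, mem_union, mem_orbitFinset] at hz ⊢
    exact hz.imp (·.trans hzw) (·.trans hzw)
  have hab : f.SameCycle a b := sameCycle_mul_swap_of_not_sameCycle h
  have hσf : ∀ {z w}, σ.SameCycle z w → f.SameCycle z w := SameCycle.mul_swap h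
  constructor
  · refine fun hxy => hxy.rel_of_forall_rel_apply
      (r := fun x y => σ.SameCycle x y ∨ (x ∈ U ∧ y ∈ U)) (fun z => .inl (SameCycle.refl σ z)) ?_ ?_
    · rintro x y z (hxy | ⟨hx, hy⟩) (hyz | ⟨hy', hz⟩)
      · exact .inl (hxy.trans hyz)
      · exact .inr ⟨hU hxy.symm hy', hz⟩
      · exact .inr ⟨hx, hU hyz hy⟩
      · exact .inr ⟨hx, hz⟩
    · intro z
      rcases eq_or_ne z a with rfl | hza
      · exact .inr ⟨by simp [U, SameCycle.rfl], by simp [U, hfa, SameCycle.rfl]⟩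
      rcases eq_or_ne z b with rfl | hzb
      · exact .inr ⟨by simp [U, SameCycle.rfl], by simp [U, hfb, SameCycle.rfl]⟩
      · exact .inl (hfz hza hzb ▸ sameCycle_apply_right.2 (SameCycle.refl σ z))
  · have hUf : ∀ z ∈ U, f.SameCycle a z := by
      intro z hz
      simp only [U, mem_union, mem_orbitFinset] at hz
      exact hz.elim hσf fun hbz => hab.trans (hσf hbz)
    rintro (hxy | ⟨hx, hy⟩)
    · exact hσf hxy
    · exact (hUf x hx).symm.trans (hUf y hy)

theorem orbitFinset_mul_swap (h : ¬σ.SameCycle a b) (x : α) :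
    (σ * swap a b).orbitFinset x = if x ∈ σ.orbitFinset a ∪ σ.orbitFinset b
      then σ.orbitFinset a ∪ σ.orbitFinset b else σ.orbitFinset x := by
  ext y
  split_ifs with hx
  · simp only [mem_orbitFinset, sameCycle_mul_swap_iff h, hx, true_and, or_iff_right_iff_imp]
    simp only [mem_union, mem_orbitFinset] at hx ⊢
    exact fun hxy => hx.imp (·.trans hxy) (·.trans hxy)
  · simp [sameCycle_mul_swap_iff h, hx]

theorem orbits_mul_swap (h : ¬σ.SameCycle a b) :
    (σ * swap a b).orbits = insert (σ.orbitFinset a ∪ σ.orbitFinset b)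
      ((σ.orbits.erase (σ.orbitFinset a)).erase (σ.orbitFinset b)) := by
  ext S
  simp only [orbits, mem_image, mem_univ, true_and, orbitFinset_mul_swap h, mem_insert,
    mem_erase]
  constructor
  · rintro ⟨x, rfl⟩
    split_ifs with hx
    · exact .inl rfl
    · simp only [mem_union, not_or] at hx
      exact .inr ⟨fun e => hx.2 (e ▸ mem_orbitFinset_self σ x),
        fun e => hx.1 (e ▸ mem_orbitFinset_self σ x), x, rfl⟩
  · rintro (rfl | ⟨hB, hA, x, rfl⟩)
    · exact ⟨a, if_pos (mem_union_left _ (mem_orbitFinset_self σ a))⟩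
    · refine ⟨x, if_neg ?_⟩
      rw [mem_union]
      rintro (hx | hx)
      exacts [hA (orbitFinset_eq_of_mem hx), hB (orbitFinset_eq_of_mem hx)]

theorem orbitFinset_mem_orbits_erase (h : ¬σ.SameCycle a b) :
    σ.orbitFinset b ∈ σ.orbits.erase (σ.orbitFinset a) :=
  mem_erase.2 ⟨fun e => h (orbitFinset_eq_orbitFinset_iff.1 e).symm, orbitFinset_mem_orbits σ b⟩

theorem union_notMem_orbits_erase :
    σ.orbitFinset a ∪ σ.orbitFinset b ∉
      (σ.orbits.erase (σ.orbitFinset a)).erase (σ.orbitFinset b) := by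
  intro hmem
  obtain ⟨hA, hmem⟩ := mem_erase.1 (mem_erase.1 hmem).2
  exact hA (eq_orbitFinset_of_mem_orbits hmem (mem_union_left _ (mem_orbitFinset_self σ a)))

theorem numOrbits_mul_swap (h : ¬σ.SameCycle a b) :
    (σ * swap a b).numOrbits + 1 = σ.numOrbits := by
  rw [numOrbits, orbits_mul_swap h, card_insert_of_notMem union_notMem_orbits_erase,
    card_erase_add_one (orbitFinset_mem_orbits_erase h),
    card_erase_add_one (orbitFinset_mem_orbits σ a), numOrbits]

theorem orbitSizeProd_mul_swap (h : ¬σ.SameCycle a b) :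
    (σ * swap a b).orbitSizeProd * (#(σ.orbitFinset a) * #(σ.orbitFinset b)) =
      σ.orbitSizeProd * (#(σ.orbitFinset a) + #(σ.orbitFinset b)) := by
  have hdisj : _root_.Disjoint (σ.orbitFinset a) (σ.orbitFinset b) := disjoint_left.2 fun z ha hb =>
    h ((mem_orbitFinset.1 ha).trans (mem_orbitFinset.1 hb).symm)
  rw [orbitSizeProd, orbits_mul_swap h, prod_insert union_notMem_orbits_erase,
    card_union_of_disjoint hdisj, orbitSizeProd, ← mul_prod_erase _ _ (orbitFinset_mem_orbits σ a),
    ← mul_prod_erase _ _ (orbitFinset_mem_orbits_erase h)]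
  ring

theorem numOrbits_le_of_sameCycle_imp (h : ∀ x y, π.SameCycle x y → σ.SameCycle x y) :
    σ.numOrbits ≤ π.numOrbits := by
  let saturate (S : Finset α) : Finset α := {y | ∃ x ∈ S, σ.SameCycle x y}
  have : σ.orbitFinset = saturate ∘ π.orbitFinset := by
    ext x y
    simp only [Function.comp_apply, saturate, mem_filter, mem_univ, true_and, mem_orbitFinset]
    exact ⟨fun hxy => ⟨x, SameCycle.refl π x, hxy⟩, fun ⟨z, hxz, hzy⟩ => (h x z hxz).trans hzy⟩
  rw [numOrbits, orbits, this, ← image_image]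
  exact card_image_le

theorem numOrbits_le_numOrbits_mul_swap (σ : Perm α) (a b : α) :
    σ.numOrbits ≤ (σ * swap a b).numOrbits + 1 := by
  by_cases h : σ.SameCycle a b
  · exact (numOrbits_le_of_sameCycle_imp fun _ _ => h.of_mul_swap).trans (Nat.le_succ _)
  · exact (numOrbits_mul_swap h).ge

theorem numOrbits_le_numOrbits_mul_prod (σ : Perm α) {l : List (Perm α)}
    (hl : ∀ τ ∈ l, τ.IsSwap) : σ.numOrbits ≤ (σ * l.prod).numOrbits + l.length := by
  induction l generalizing σ with
  | nil => simp
  | cons τ l ih =>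
    obtain ⟨a, b, -, rfl⟩ := hl τ List.mem_cons_self
    have := ih (σ * swap a b) fun τ hτ => hl τ (List.mem_cons_of_mem _ hτ)
    rw [List.prod_cons, ← mul_assoc, List.length_cons]
    have := numOrbits_le_numOrbits_mul_swap σ a b
    omega

def mergingPairs (σ : Perm α) : Finset (α × α) := {p | ¬σ.SameCycle p.1 p.2}

def mergingSwaps (σ : Perm α) : Finset (Perm α) := σ.mergingPairs.image fun p => swap p.1 p.2

theorem sum_inv_card_orbitFinset (σ : Perm α) :
    ∑ x, (#(σ.orbitFinset x) : ℚ)⁻¹ = σ.numOrbits := by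
  rw [Finset.sum_comp (fun S : Finset α => (#S : ℚ)⁻¹), numOrbits, card_eq_sum_ones, Nat.cast_sum]
  refine sum_congr rfl fun S hS => ?_
  obtain ⟨x, -, rfl⟩ := mem_image.1 hS
  rw [filter_orbitFinset_eq, nsmul_eq_mul, Nat.cast_one,
    mul_inv_cancel₀ (Nat.cast_ne_zero.2 (card_orbitFinset_ne_zero σ x))]

theorem sum_mem_orbitFinset_inv_card (σ : Perm α) (x : α) :
    ∑ y ∈ σ.orbitFinset x, (#(σ.orbitFinset y) : ℚ)⁻¹ = 1 := by
  rw [sum_congr rfl fun y hy => by rw [orbitFinset_eq_of_mem hy], sum_const, nsmul_eq_mul,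
    mul_inv_cancel₀ (Nat.cast_ne_zero.2 (card_orbitFinset_ne_zero σ x))]

theorem orbitSizeProd_mul_swap_eq (h : ¬σ.SameCycle a b) :
    ((σ * swap a b).orbitSizeProd : ℚ) =
      σ.orbitSizeProd * ((#(σ.orbitFinset a) : ℚ)⁻¹ + (#(σ.orbitFinset b) : ℚ)⁻¹) := by
  have hA := Nat.cast_ne_zero (R := ℚ) |>.2 (card_orbitFinset_ne_zero σ a)
  have hB := Nat.cast_ne_zero (R := ℚ) |>.2 (card_orbitFinset_ne_zero σ b)
  have := congrArg (Nat.cast (R := ℚ)) (orbitSizeProd_mul_swap h)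
  push_cast at this
  field_simp
  linear_combination this

theorem sum_orbitSizeProd_mul_swap (σ : Perm α) :
    ∑ p ∈ σ.mergingPairs, ((σ * swap p.1 p.2).orbitSizeProd : ℚ) =
      2 * Fintype.card α * (σ.numOrbits - 1) * σ.orbitSizeProd := by
  rw [mergingPairs, sum_filter, Fintype.sum_prod_type]
  calc ∑ a, ∑ b, (if ¬σ.SameCycle a b then ((σ * swap a b).orbitSizeProd : ℚ) else 0)
      = ∑ a, σ.orbitSizeProd * (#(σ.orbitFinset a)ᶜ * (#(σ.orbitFinset a) : ℚ)⁻¹ +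
          ∑ b ∈ (σ.orbitFinset a)ᶜ, (#(σ.orbitFinset b) : ℚ)⁻¹) := by
        refine sum_congr rfl fun a _ => ?_
        have hcompl : ({b | ¬σ.SameCycle a b} : Finset α) = (σ.orbitFinset a)ᶜ := by ext; simp
        rw [← sum_filter, hcompl,
          sum_congr rfl fun b hb => orbitSizeProd_mul_swap_eq (by simpa using hb)]
        simp_rw [mul_add]
        rw [sum_add_distrib, sum_const, ← mul_sum, nsmul_eq_mul]
        ring
    _ = ∑ a, σ.orbitSizeProd * (Fintype.card α * (#(σ.orbitFinset a) : ℚ)⁻¹ - 1 +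
          (σ.numOrbits - 1)) := by
        refine sum_congr rfl fun a _ => ?_
        rw [card_compl, Nat.cast_sub (card_le_univ _), sub_mul,
          mul_inv_cancel₀ (Nat.cast_ne_zero.2 (card_orbitFinset_ne_zero σ a)),
          ← sum_mem_orbitFinset_inv_card σ a, ← sum_inv_card_orbitFinset σ,
          ← sum_compl_add_sum (σ.orbitFinset a), add_sub_cancel_right]
    _ = 2 * Fintype.card α * (σ.numOrbits - 1) * σ.orbitSizeProd := by
        rw [← mul_sum, sum_add_distrib, sum_sub_distrib, ← mul_sum, sum_inv_card_orbitFinset]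
        simp only [sum_const, card_univ, nsmul_eq_mul]
        ring

theorem mem_mergingSwaps {τ : Perm α} :
    τ ∈ σ.mergingSwaps ↔ ∃ a b, ¬σ.SameCycle a b ∧ swap a b = τ := by
  simp [mergingSwaps, mergingPairs]

theorem numOrbits_mul_of_mem_mergingSwaps {τ : Perm α} (hτ : τ ∈ σ.mergingSwaps) :
    (σ * τ).numOrbits + 1 = σ.numOrbits := by
  obtain ⟨a, b, h, rfl⟩ := mem_mergingSwaps.1 hτ
  exact numOrbits_mul_swap h

theorem sum_mergingSwaps_orbitSizeProd (σ : Perm α) :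
    ∑ τ ∈ σ.mergingSwaps, ((σ * τ).orbitSizeProd : ℚ) =
      Fintype.card α * (σ.numOrbits - 1) * σ.orbitSizeProd := by
  have hs : ∀ p ∈ σ.mergingPairs, p.1 ≠ p.2 ∧ p.swap ∈ σ.mergingPairs := fun p hp => by
    simp only [mergingPairs, mem_filter, mem_univ, true_and] at hp ⊢
    exact ⟨fun e => hp (e ▸ SameCycle.refl σ p.1), fun h => hp h.symm⟩
  have := sum_comp_swap hs fun τ => ((σ * τ).orbitSizeProd : ℚ)
  rw [sum_orbitSizeProd_mul_swap, nsmul_eq_mul, Nat.cast_two, ← mergingSwaps] at this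
  linarith

def joinings (σ : Perm α) : Set (List (Perm α)) :=
  {l | l.length + 1 = σ.numOrbits ∧ (∀ τ ∈ l, τ.IsSwap) ∧ (σ * l.prod).numOrbits = 1}

theorem finite_joinings (σ : Perm α) : σ.joinings.Finite :=
  (List.finite_length_eq (Perm α) (σ.numOrbits - 1)).subset fun l hl => by
    simp only [Set.mem_ofPred_eq]
    have := hl.1
    omega

theorem joinings_of_numOrbits_eq_one (h : σ.numOrbits = 1) : σ.joinings = {[]} := by
  ext (_ | ⟨τ, l⟩) <;> simp [joinings, h]

theorem cons_mem_joinings_iff {τ : Perm α} {l : List (Perm α)} :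
    τ :: l ∈ σ.joinings ↔ τ ∈ σ.mergingSwaps ∧ l ∈ (σ * τ).joinings := by
  simp only [joinings, Set.mem_ofPred_eq, List.length_cons, List.forall_mem_cons, List.prod_cons,
    ← mul_assoc]
  constructor
  · rintro ⟨hlen, ⟨⟨a, b, -, rfl⟩, hl⟩, hone⟩
    -- otherwise `l` would have to merge `σ.numOrbits` orbits with `σ.numOrbits - 2` swaps
    have hab : ¬σ.SameCycle a b := fun h => by
      have := numOrbits_le_of_sameCycle_imp fun _ _ => h.of_mul_swap
      have := numOrbits_le_numOrbits_mul_prod (σ * swap a b) hl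
      omega
    have := numOrbits_mul_swap hab
    exact ⟨mem_mergingSwaps.2 ⟨a, b, hab, rfl⟩, by omega, hl, hone⟩
  · rintro ⟨hτ, hlen, hl, hone⟩
    obtain ⟨a, b, hab, rfl⟩ := mem_mergingSwaps.1 hτ
    have := numOrbits_mul_swap hab
    exact ⟨by omega, ⟨⟨a, b, fun e => hab (e ▸ SameCycle.refl σ a), rfl⟩, hl⟩, hone⟩

theorem joinings_eq_biUnion (h : σ.numOrbits ≠ 1) :
    σ.joinings = ⋃ τ ∈ (σ.mergingSwaps : Set (Perm α)), List.cons τ '' (σ * τ).joinings := by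
  ext (_ | ⟨τ, l⟩)
  · simp [joinings, Ne.symm h]
  · simp [cons_mem_joinings_iff, and_comm]

theorem ncard_joinings (h : σ.numOrbits ≠ 1) :
    σ.joinings.ncard = ∑ τ ∈ σ.mergingSwaps, (σ * τ).joinings.ncard := by
  rw [joinings_eq_biUnion h, Set.Finite.ncard_biUnion σ.mergingSwaps.finite_toSet
    (fun τ _ => (σ * τ).finite_joinings.image _), finsum_mem_coe_finset]
  · exact sum_congr rfl fun τ _ => Set.ncard_image_of_injective _ List.cons_injective
  · intro τ _ τ' _ hne
    refine Set.disjoint_left.2 ?_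
    rintro _ ⟨l, -, rfl⟩ ⟨l', -, he⟩
    exact hne (List.cons.inj he).1.symm

theorem card_mul_ncard_joinings {k : ℕ} (h : σ.numOrbits = k + 1) :
    Fintype.card α * σ.joinings.ncard = k ! * Fintype.card α ^ k * σ.orbitSizeProd := by
  induction k generalizing σ with
  | zero =>
    rw [joinings_of_numOrbits_eq_one h, Set.ncard_singleton, orbitSizeProd_of_numOrbits_eq_one h]
    simp
  | succ k ih =>
    have hsum : ∑ τ ∈ σ.mergingSwaps, (σ * τ).orbitSizeProd =
        Fintype.card α * (k + 1) * σ.orbitSizeProd := by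
      have hq : ∑ τ ∈ σ.mergingSwaps, ((σ * τ).orbitSizeProd : ℚ) =
          Fintype.card α * (k + 1) * σ.orbitSizeProd := by
        rw [sum_mergingSwaps_orbitSizeProd, h]
        push_cast
        ring
      exact_mod_cast hq
    rw [ncard_joinings (by omega), mul_sum, sum_congr rfl fun τ hτ =>
      ih (by have := numOrbits_mul_of_mem_mergingSwaps hτ; omega), ← mul_sum, hsum,
      Nat.factorial_succ, pow_succ]
    ring

theorem orbitFinset_one (x : α) : (1 : Perm α).orbitFinset x = {x} := by
  ext y
  simp [eq_comm]

theorem numOrbits_one : (1 : Perm α).numOrbits = Fintype.card α := by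
  rw [numOrbits, orbits, funext orbitFinset_one, card_image_of_injective _ singleton_injective,
    card_univ]

theorem orbitSizeProd_one : (1 : Perm α).orbitSizeProd = 1 := by
  refine prod_eq_one fun S hS => ?_
  obtain ⟨x, rfl⟩ := mem_orbits.1 hS
  rw [orbitFinset_one, card_singleton]

theorem numOrbits_eq_one_iff [Nonempty α] : σ.numOrbits = 1 ↔ ∀ x y, σ.SameCycle x y := by
  refine ⟨fun h x y => ?_, fun h => card_eq_one.2 ⟨univ, ?_⟩⟩
  · have := orbitFinset_mem_orbits σ x
    rw [orbits_eq_singleton_univ h, mem_singleton] at this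
    exact mem_orbitFinset.1 (this ▸ mem_univ y)
  · have hx : ∀ x, σ.orbitFinset x = univ := fun x =>
      eq_univ_of_forall fun y => mem_orbitFinset.2 (h x y)
    ext S
    simp only [mem_orbits, hx, exists_const, mem_singleton, eq_comm]

theorem cycleType_eq_singleton_card_iff (hα : 2 ≤ Fintype.card α) :
    σ.cycleType = {Fintype.card α} ↔ ∀ x y, σ.SameCycle x y := by
  constructor
  · intro h x y
    have hcycle : σ.IsCycle := card_cycleType_eq_one.1 (by simp [h])
    have hsupp : σ.support = univ := eq_univ_of_card _ (by simp [← sum_cycleType, h])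
    exact hcycle.sameCycle (mem_support.1 (hsupp ▸ mem_univ x)) (mem_support.1 (hsupp ▸ mem_univ y))
  · intro h
    have hmoved : ∀ x, σ x ≠ x := fun x hx => by
      obtain ⟨y, hy⟩ := Fintype.exists_ne_of_one_lt_card hα x
      exact hy ((h x y).eq_of_left hx).symm
    have hsupp : σ.support = univ := eq_univ_of_forall fun x => mem_support.2 (hmoved x)
    obtain ⟨x⟩ := Fintype.card_pos_iff.1 (by omega : 0 < Fintype.card α)
    have hcycle : σ.IsCycle := ⟨x, hmoved x, fun y _ => h x y⟩
    rw [hcycle.cycleType, hsupp, card_univ]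

def factorizations (ρ : Perm α) : Set (List (Perm α)) :=
  {l | l.length = Fintype.card α - 1 ∧ (∀ τ ∈ l, τ.IsSwap) ∧ l.prod = ρ}

theorem finite_factorizations (ρ : Perm α) : (factorizations ρ).Finite :=
  (List.finite_length_eq (Perm α) (Fintype.card α - 1)).subset fun _ hl => hl.1

theorem ncard_factorizations_le_conj (g ρ : Perm α) :
    (factorizations ρ).ncard ≤ (factorizations (g * ρ * g⁻¹)).ncard := by
  refine Set.ncard_le_ncard_of_injOn (List.map (MulAut.conj g)) (fun l ⟨hlen, hl, hprod⟩ => ?_)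
    (List.map_injective_iff.2 (MulAut.conj g).injective).injOn (finite_factorizations _)
  refine ⟨by simpa using hlen, fun τ hτ => ?_, by rw [← map_list_prod, hprod, MulAut.conj_apply]⟩
  obtain ⟨τ', hτ', rfl⟩ := List.mem_map.1 hτ
  exact (hl τ' hτ').conj g

theorem ncard_factorizations_conj (g ρ : Perm α) :
    (factorizations (g * ρ * g⁻¹)).ncard = (factorizations ρ).ncard := by
  refine le_antisymm ?_ (ncard_factorizations_le_conj g ρ)
  simpa [mul_assoc] using ncard_factorizations_le_conj g⁻¹ (g * ρ * g⁻¹)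

theorem joinings_one_eq_biUnion (hα : 2 ≤ Fintype.card α) :
    (1 : Perm α).joinings = ⋃ ρ ∈ (({ρ | ρ.cycleType = {Fintype.card α}} : Finset (Perm α)) :
      Set (Perm α)), factorizations ρ := by
  have : Nonempty α := Fintype.card_pos_iff.1 (by omega)
  ext l
  simp only [joinings, factorizations, numOrbits_one, one_mul, numOrbits_eq_one_iff,
    ← cycleType_eq_singleton_card_iff hα, coe_filter, Set.mem_iUnion, Set.mem_ofPred_eq,
    mem_univ, true_and, exists_prop]
  constructor
  · rintro ⟨hlen, hl, hcycle⟩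
    exact ⟨_, hcycle, by omega, hl, rfl⟩
  · rintro ⟨ρ, hρ, hlen, hl, rfl⟩
    exact ⟨by omega, hl, hρ⟩

theorem ncard_factorizations_of_cycleType {c : Perm α} (hc : c.cycleType = {Fintype.card α}) :
    (factorizations c).ncard = Fintype.card α ^ (Fintype.card α - 2) := by
  set n := Fintype.card α
  have hn : 2 ≤ n := two_le_of_mem_cycleType (hc ▸ Multiset.mem_singleton_self n)
  have hcycles : #({ρ | ρ.cycleType = {n}} : Finset (Perm α)) = (n - 1)! := by
    rw [card_of_cycleType_singleton hn le_rfl, Nat.choose_self, mul_one]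
  have hjoin : (1 : Perm α).joinings.ncard = (n - 1)! * (factorizations c).ncard := by
    rw [joinings_one_eq_biUnion hn, Set.Finite.ncard_biUnion (finite_toSet _)
      (fun ρ _ => finite_factorizations ρ), finsum_mem_coe_finset, ← hcycles, ← smul_eq_mul,
      ← sum_const]
    · refine sum_congr rfl fun ρ hρ => ?_
      obtain ⟨g, rfl⟩ :=
        isConj_iff.1 (isConj_iff_cycleType_eq.2 (hc.trans (mem_filter.1 hρ).2.symm))
      exact ncard_factorizations_conj g c
    · intro ρ _ ρ' _ hne
      exact Set.disjoint_left.2 fun l hl hl' => hne (hl.2.2.symm.trans hl'.2.2)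
  have hmaster :=
    card_mul_ncard_joinings (σ := (1 : Perm α)) (k := n - 1) (by rw [numOrbits_one]; omega)
  rw [hjoin, orbitSizeProd_one, mul_one] at hmaster
  refine Nat.eq_of_mul_eq_mul_left (by positivity : 0 < n * (n - 1)!) ?_
  calc n * (n - 1)! * (factorizations c).ncard = (n - 1)! * n ^ (n - 1) := by
        rw [← hmaster]; ring
    _ = n * (n - 1)! * n ^ (n - 2) := by
        rw [← show n - 2 + 1 = n - 1 by omega, pow_succ]; ring

end Orbits

end Equiv.Perm

/-- Dénes' theorem: the number of ordered factorizations of a fixed `d`-cycle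
in `S_d` as a product of `d - 1` transpositions is `d ^ (d - 2)`. -/
theorem stmt17 (d : ℕ) (c : Equiv.Perm (Fin d)) (hc : c.cycleType = {d}) :
    Nat.card {l : List (Equiv.Perm (Fin d)) //
      l.length = d - 1 ∧ (∀ τ ∈ l, τ.IsSwap) ∧ l.prod = c} = d ^ (d - 2) := by
  have := Equiv.Perm.ncard_factorizations_of_cycleType (c := c) (by rw [hc, Fintype.card_fin])
  rw [← Nat.card_coe_set_eq, Equiv.Perm.factorizations, Fintype.card_fin] at this
  exact this
end
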